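/- Rank sub-uniformity under exchangeability: if (V₁,…,V_{n+1}) is an exchangeable vector of real random variables and R = (n+1)^{-1} Σ_{i=1}^{n+1} 1{V_i ≤ V_{n+1}}, then P{R ≤ α} ≤ α for all α ∈ [0,1]. -/

import Mathlib

open MeasureTheory Finset
open scoped ENNReal

/-! By exchangeability every coordinate has the same probability of having rank at most `k`,
so `P{rank of V_{n+1} ≤ k}` is the average over `j` of `P{rank of V_j ≤ k}`, i.e. the expected
number of coordinates of rank at most `k`, divided by `n + 1`. Deterministically at most `k`
coordinates have rank at most `k`: the largest of them has all the others below it, so its rank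
bounds their number. Taking `k = ⌊α (n + 1)⌋` gives the claim. -/

theorem MeasureTheory.sum_measure_le_mul_measure_univ {Ω ι : Type*} [MeasurableSpace Ω]
    [Fintype ι] (μ : Measure Ω) {A : ι → Set Ω} [∀ x, DecidablePred (x ∈ A ·)]
    (hA : ∀ j, MeasurableSet (A j)) {k : ℕ} (hk : ∀ x, #{j | x ∈ A j} ≤ k) :
    ∑ j, μ (A j) ≤ k * μ Set.univ := by
  have hcount (x : Ω) : ∑ j, (A j).indicator 1 x = (#{j | x ∈ A j} : ℝ≥0∞) := by
    simp only [Set.indicator_apply, Pi.one_apply, sum_boole]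
  calc ∑ j, μ (A j) = ∫⁻ x, ∑ j, (A j).indicator 1 x ∂μ := by
        rw [lintegral_finsetSum _ fun j _ => measurable_one.indicator (hA j)]
        simp only [lintegral_indicator_one (hA _)]
    _ ≤ ∫⁻ _, (k : ℝ≥0∞) ∂μ := lintegral_mono fun x => by
        rw [hcount]
        exact Nat.cast_le.2 (hk x)
    _ = k * μ Set.univ := lintegral_const _

section Rank

variable {ι α : Type*} [Fintype ι] [LinearOrder α]

def rankCount (V : ι → α) (j : ι) : ℕ := #{i | V i ≤ V j}

theorem rankCount_comp_perm (V : ι → α) (σ : Equiv.Perm ι) (j : ι) :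
    rankCount (V ∘ σ) j = rankCount V (σ j) :=
  card_equiv σ fun i => by simp

theorem card_rankCount_le_le (V : ι → α) (k : ℕ) : #{j | rankCount V j ≤ k} ≤ k := by
  obtain hS | hS := (univ.filter fun j => rankCount V j ≤ k).eq_empty_or_nonempty
  · simp [hS]
  obtain ⟨m, hm, hmax⟩ := exists_max_image _ V hS
  calc #{j | rankCount V j ≤ k} ≤ rankCount V m :=
        card_le_card fun j hj => mem_filter.2 ⟨mem_univ j, hmax j hj⟩
    _ ≤ k := (mem_filter.1 hm).2

variable [TopologicalSpace α] [MeasurableSpace α] [OpensMeasurableSpace α]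
  [OrderClosedTopology α] [SecondCountableTopology α]

theorem measurableSet_rankCount_le (j : ι) (k : ℕ) :
    MeasurableSet {V : ι → α | rankCount V j ≤ k} := by
  simp only [rankCount, card_filter]
  refine measurableSet_le (Finset.measurable_sum _ fun i _ => ?_) measurable_const
  exact Measurable.ite (measurableSet_le (measurable_pi_apply i) (measurable_pi_apply j))
    measurable_const measurable_const

variable {μ : Measure (ι → α)}

theorem measure_rankCount_le_eq_of_perm_invariant
    (hexch : ∀ σ : Equiv.Perm ι, μ.map (fun V => V ∘ σ) = μ) (j j' : ι) (k : ℕ) :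
    μ {V | rankCount V j ≤ k} = μ {V | rankCount V j' ≤ k} := by
  classical
  have hmeas : Measurable fun V : ι → α => V ∘ Equiv.swap j j' := by fun_prop
  conv_lhs =>
    rw [← hexch (Equiv.swap j j'), Measure.map_apply hmeas (measurableSet_rankCount_le j k)]
  simp only [Set.preimage_ofPred_eq, rankCount_comp_perm, Equiv.swap_apply_left]

theorem measure_rankCount_le_le_of_perm_invariant [IsProbabilityMeasure μ]
    (hexch : ∀ σ : Equiv.Perm ι, μ.map (fun V => V ∘ σ) = μ) (j : ι) (k : ℕ) :
    μ {V | rankCount V j ≤ k} ≤ k / Fintype.card ι := by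
  have : Nonempty ι := ⟨j⟩
  have hsum := sum_measure_le_mul_measure_univ μ (fun j' => measurableSet_rankCount_le j' k)
    (card_rankCount_le_le · k)
  simp only [← measure_rankCount_le_eq_of_perm_invariant hexch j, sum_const, card_univ,
    nsmul_eq_mul, measure_univ, mul_one] at hsum
  rw [ENNReal.le_div_iff_mul_le (.inl (Nat.cast_ne_zero.2 Fintype.card_ne_zero)) (by simp),
    mul_comm]
  exact hsum

end Rank

/-- Rank sub-uniformity under exchangeability: if the joint law `μ` of
`(V₁,…,V_{n+1})` is exchangeable and
`R = (n+1)⁻¹ #{i : Vᵢ ≤ V_{n+1}}`, then `P{R ≤ α} ≤ α` for all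
`α ∈ [0,1]`. -/
theorem rank_subuniform_of_exchangeable
    (n : ℕ)
    (μ : Measure (Fin (n + 1) → ℝ)) [IsProbabilityMeasure μ]
    (hexch : ∀ σ : Equiv.Perm (Fin (n + 1)), μ.map (fun V => V ∘ σ) = μ) :
    ∀ α ∈ Set.Icc (0:ℝ) 1,
      μ {V | ((n + 1 : ℝ))⁻¹ *
          ((Finset.univ.filter
            (fun i : Fin (n + 1) => V i ≤ V (Fin.last n))).card : ℝ) ≤ α}
        ≤ ENNReal.ofReal α := by
  rintro α ⟨hα, -⟩
  have hαn : 0 ≤ α * (n + 1) := by positivity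
  set k := ⌊α * (n + 1)⌋₊
  have hevent : {V : Fin (n + 1) → ℝ | ((n + 1 : ℝ))⁻¹ *
      ((Finset.univ.filter (fun i => V i ≤ V (Fin.last n))).card : ℝ) ≤ α}
      = {V | rankCount V (Fin.last n) ≤ k} := by
    ext V
    rw [Set.mem_ofPred_eq, Set.mem_ofPred_eq, rankCount, Nat.le_floor_iff hαn,
      inv_mul_le_iff₀ (by positivity), mul_comm]
  rw [hevent]
  refine (measure_rankCount_le_le_of_perm_invariant hexch _ k).trans
    (ENNReal.div_le_of_le_mul ?_)
  rw [Fintype.card_fin, ← ENNReal.ofReal_natCast, ← ENNReal.ofReal_natCast (n + 1),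
    ← ENNReal.ofReal_mul hα]
  exact ENNReal.ofReal_le_ofReal (by simpa using Nat.floor_le hαn)
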